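/- Let n ≥ p be positive integers and let E ⊆ {1,…,n} × {1,…,p} be a support pattern that admits a matching covering every column, i.e., there is an injective map g : {1,…,p} → {1,…,n} with (g(c), c) ∈ E for every column c. Then for Lebesgue-almost every assignment of real values to the entries indexed by E (all entries outside E being zero), the resulting n×p matrix has full column rank p. -/

import Mathlib

/-!
The entries of the square submatrix on the rows `g c` are polynomial functions of the
assignment, so its determinant is a polynomial `q` in the variables indexed by `E`. Evaluating
`q` at the indicator of the matching edges gives `det 1 = 1`, so `q ≠ 0`; and the zero set of a
nonzero real polynomial is Lebesgue-null (induction on the number of variables: a univariate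
polynomial has finitely many roots, then Fubini). Off that null set the submatrix is invertible,
so the full matrix has rank `p`.
-/

open MeasureTheory

theorem Polynomial.ae_eval_ne_zero {R : Type*} [CommRing R] [IsDomain R] [MeasurableSpace R]
    (μ : Measure R) [NullSingletonClass μ] {P : Polynomial R} (hP : P ≠ 0) :
    ∀ᵐ y ∂μ, P.eval y ≠ 0 :=
  ae_iff.mpr <| by simpa using (Polynomial.finite_setOfPred_isRoot hP).measure_zero μ

namespace MvPolynomial

theorem eval_ne_zero_of_isEmpty {ι R : Type*} [IsEmpty ι] [CommSemiring R] {q : MvPolynomial ι R}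
    (hq : q ≠ 0) (x : ι → R) : eval x q ≠ 0 := by
  rw [q.eq_C_of_isEmpty, eval_C]
  exact fun h => hq (by rw [q.eq_C_of_isEmpty, h, C_0])

variable {ι κ : Type*} [Fintype ι]

theorem measurableSet_setOf_eval_ne_zero (q : MvPolynomial ι ℝ) :
    MeasurableSet {x : ι → ℝ | eval x q ≠ 0} :=
  (continuous_eval q).measurable (measurableSet_singleton 0).compl

theorem ae_eval_ne_zero_option (μ : Option ι → Measure ℝ) [∀ i, NullSingletonClass (μ i)]
    [∀ i, SigmaFinite (μ i)]
    (ih : ∀ q : MvPolynomial ι ℝ, q ≠ 0 →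
      ∀ᵐ x ∂Measure.pi (fun i => μ (some i)), eval x q ≠ 0)
    {q : MvPolynomial (Option ι) ℝ} (hq : q ≠ 0) : ∀ᵐ x ∂Measure.pi μ, eval x q ≠ 0 := by
  set e := MeasurableEquiv.piOptionEquivProd (fun _ : Option ι => ℝ)
  rw [← Measure.pi_map_piOptionEquivProd, e.symm.measurableEmbedding.ae_map_iff,
    Measure.ae_prod_iff_ae_ae (p := fun z => eval (e.symm z) q ≠ 0)
      (q.measurableSet_setOf_eval_ne_zero.preimage e.symm.measurable)]
  set P := optionEquivLeft ℝ ι q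
  have hP : P.leadingCoeff ≠ 0 := by simpa [P] using hq
  filter_upwards [ih _ hP] with s hs
  have hPs : P.map (eval s) ≠ 0 := fun h => hs <| by
    rw [Polynomial.leadingCoeff, ← Polynomial.coeff_map, h, Polynomial.coeff_zero]
  filter_upwards [Polynomial.ae_eval_ne_zero _ hPs] with y hy
  have he : e.symm (s, y) = fun i => i.elim y s := by ext (_ | _) <;> rfl
  rwa [he, optionEquivLeft_elim_eval]

theorem ae_eval_ne_zero_of_equiv [Fintype κ] (e : ι ≃ κ) (μ : κ → Measure ℝ)
    [∀ i, SigmaFinite (μ i)]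
    (h : ∀ q : MvPolynomial ι ℝ, q ≠ 0 → ∀ᵐ x ∂Measure.pi (fun i => μ (e i)), eval x q ≠ 0)
    {q : MvPolynomial κ ℝ} (hq : q ≠ 0) : ∀ᵐ x ∂Measure.pi μ, eval x q ≠ 0 := by
  set F := MeasurableEquiv.piCongrLeft (fun _ : κ => ℝ) e
  rw [← (measurePreserving_piCongrLeft μ e).map_eq, F.measurableEmbedding.ae_map_iff]
  have hq' : rename e.symm q ≠ 0 :=
    (map_ne_zero_iff _ (rename_injective _ e.symm.injective)).mpr hq
  filter_upwards [h _ hq'] with x hx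
  have hF : F x = x ∘ e.symm := by
    ext k; simp [F, MeasurableEquiv.coe_piCongrLeft, Equiv.piCongrLeft_apply]
  rwa [hF, ← eval_rename]

theorem ae_eval_ne_zero (μ : ι → Measure ℝ) [∀ i, NullSingletonClass (μ i)]
    [∀ i, SigmaFinite (μ i)] {q : MvPolynomial ι ℝ} (hq : q ≠ 0) :
    ∀ᵐ x ∂Measure.pi μ, eval x q ≠ 0 := by
  revert μ q
  refine Fintype.induction_empty_option (P := fun ι _ => ∀ (μ : ι → Measure ℝ)
    [∀ i, NullSingletonClass (μ i)] [∀ i, SigmaFinite (μ i)] {q : MvPolynomial ι ℝ},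
      q ≠ 0 → ∀ᵐ x ∂Measure.pi μ, eval x q ≠ 0) ?_ ?_ ?_ ι
  · intro α β _ e ih μ _ _ q hq
    let := Fintype.ofEquiv β e.symm
    exact ae_eval_ne_zero_of_equiv e μ (fun q hq => ih _ hq) hq
  · exact fun μ _ _ q hq => .of_forall (eval_ne_zero_of_isEmpty hq)
  · intro α _ ih μ _ _ q hq
    exact ae_eval_ne_zero_option μ (fun q hq => ih _ hq) hq

end MvPolynomial

namespace Matrix

variable {m n R S : Type*}

theorem rank_eq_card_of_det_submatrix_ne_zero {K : Type*} [Field K] [Fintype n] [DecidableEq n]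
    (A : Matrix m n K) {r : n → m} (h : (A.submatrix r id).det ≠ 0) :
    A.rank = Fintype.card n :=
  le_antisymm A.rank_le_card_width (rank_of_det_ne_zero h ▸ A.rank_submatrix_le r id)

variable [DecidableEq m] [DecidableEq n]

def ofPattern [Zero R] (E : Finset (m × n)) (v : E → R) : Matrix m n R :=
  of fun i j => if h : (i, j) ∈ E then v ⟨(i, j), h⟩ else 0

theorem ofPattern_map [Zero R] [Zero S] {f : R → S} (hf : f 0 = 0) (E : Finset (m × n))
    (v : E → R) : (ofPattern E v).map f = ofPattern E (f ∘ v) := by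
  ext i j
  by_cases h : (i, j) ∈ E <;> simp [ofPattern, h, hf]

theorem submatrix_ofPattern_eq_one [Zero R] [One R] {E : Finset (m × n)} {g : n → m}
    (hg_inj : Function.Injective g) (hg : ∀ c, (g c, c) ∈ E) :
    (ofPattern E fun e => if (e : m × n).1 = g (e : m × n).2 then (1 : R) else 0).submatrix g id
      = 1 := by
  ext j c
  by_cases h : (g j, c) ∈ E
  · simp [ofPattern, one_apply, h, hg_inj.eq_iff]
  · have hjc : j ≠ c := by rintro rfl; exact h (hg j)
    simp [ofPattern, h, hjc]

theorem ofPattern_X_map_eval [CommSemiring R] (E : Finset (m × n)) (v : E → R) :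
    (ofPattern E (MvPolynomial.X : E → MvPolynomial E R)).map (MvPolynomial.eval v)
      = ofPattern E v := by
  rw [ofPattern_map (map_zero _)]
  exact congrArg _ (funext fun e => MvPolynomial.eval_X _)

theorem eval_det_submatrix_ofPattern_X [Fintype n] [CommRing R] (E : Finset (m × n)) (r : n → m)
    (v : E → R) :
    MvPolynomial.eval v ((ofPattern E (MvPolynomial.X : E → MvPolynomial E R)).submatrix r id).det
      = ((ofPattern E v).submatrix r id).det := by
  rw [RingHom.map_det, RingHom.mapMatrix_apply, ← submatrix_map, ofPattern_X_map_eval]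

theorem det_submatrix_ofPattern_X_ne_zero [Fintype n] [CommRing R] [Nontrivial R]
    {E : Finset (m × n)} {g : n → m} (hg_inj : Function.Injective g) (hg : ∀ c, (g c, c) ∈ E) :
    ((ofPattern E (MvPolynomial.X : E → MvPolynomial E R)).submatrix g id).det ≠ 0 := fun h => by
  have h₁ := congrArg
    (MvPolynomial.eval fun e : E => if (e : m × n).1 = g (e : m × n).2 then (1 : R) else 0) h
  rw [eval_det_submatrix_ofPattern_X, submatrix_ofPattern_eq_one hg_inj hg, det_one,
    map_zero] at h₁
  exact one_ne_zero h₁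

end Matrix

theorem almost_surely_full_column_rank_of_matching_general
    (n p : ℕ)
    (E : Finset (Fin n × Fin p))
    (g : Fin p → Fin n) (hg_inj : Function.Injective g)
    (hg : ∀ c : Fin p, (g c, c) ∈ E) :
    ∀ᵐ v : (E → ℝ) ∂volume,
      (Matrix.of fun i j =>
        if h : (i, j) ∈ E then v ⟨(i, j), h⟩ else (0 : ℝ)).rank = p := by
  filter_upwards [MvPolynomial.ae_eval_ne_zero (fun _ => volume)
    (Matrix.det_submatrix_ofPattern_X_ne_zero (R := ℝ) hg_inj hg)] with v hv
  rw [Matrix.eval_det_submatrix_ofPattern_X] at hv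
  exact ((Matrix.ofPattern E v).rank_eq_card_of_det_submatrix_ne_zero hv).trans
    (Fintype.card_fin p)

/-- If a support pattern `E ⊆ {1,…,n} × {1,…,p}` (with `n ≥ p`) admits a matching
covering every column, i.e. an injective `g : Fin p → Fin n` with `(g c, c) ∈ E`
for each column `c`, then for Lebesgue-almost every assignment of real values to
the entries indexed by `E` (entries outside `E` being zero), the resulting
`n × p` matrix has full column rank `p`. -/
theorem almost_surely_full_column_rank_of_matching
    (n p : ℕ) (hp : 0 < p) (hnp : p ≤ n)
    (E : Finset (Fin n × Fin p))
    (g : Fin p → Fin n) (hg_inj : Function.Injective g)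
    (hg : ∀ c : Fin p, (g c, c) ∈ E) :
    ∀ᵐ v : (E → ℝ) ∂volume,
      (Matrix.of fun i j =>
        if h : (i, j) ∈ E then v ⟨(i, j), h⟩ else (0 : ℝ)).rank = p :=
  almost_surely_full_column_rank_of_matching_general n p E g hg_inj hg
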